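/- arXiv:1906.09392 — 2 statements merged into one kernel-verified Lean document; each statement's English description precedes it below -/
import Mathlib

section
/- Every occurrence of a palindromic factor of the Thue-Morse word whose length is not equal to 1 or 3 is of type (m, 4−m): if ℓ ≥ 1 with ℓ ≠ 1 and ℓ ≠ 3, and the factor of t of length ℓ starting at position i is a palindrome, then 2i + ℓ ≡ 0 (mod 4), i.e., the starting position i and the ending position i + ℓ have opposite residues modulo 4. -/
/-- The Thue–Morse word: `tm n` is the number of ones (sum of binary digits)
in the binary expansion of `n`, taken mod 2. -/
def tm (n : ℕ) : ℕ := (Nat.digits 2 n).sum % 2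

/-- `ps` is a factorization of the finite word `w` into nonempty palindromes. -/
def IsPalDecomp (w : List ℕ) (ps : List (List ℕ)) : Prop :=
  ps.flatten = w ∧ ∀ p ∈ ps, p ≠ [] ∧ p.Palindrome

/-- The palindromic length of a finite word: the least number of nonempty
palindromes whose concatenation is the word (0 for the empty word). -/
noncomputable def palLen (w : List ℕ) : ℕ :=
  sInf {k | ∃ ps, ps.length = k ∧ IsPalDecomp w ps}

/-- `pplTM n` is the palindromic length of the prefix of length `n`
of the Thue–Morse word. -/
noncomputable def pplTM (n : ℕ) : ℕ := palLen ((List.range n).map tm)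

/-- The factor of the Thue–Morse word of length `ℓ` starting at position `i`. -/
def tmFactor (i ℓ : ℕ) : List ℕ := (List.range ℓ).map (fun j => tm (i + j))

lemma tm_lt (n : ℕ) : tm n < 2 := Nat.mod_lt _ (by norm_num)

lemma tm_two_mul (n : ℕ) : tm (2*n) = tm n := by
  rcases Nat.eq_zero_or_pos n with h|h
  · simp [h]
  · unfold tm
    rw [Nat.digits_def' (by norm_num : 1 < 2) (by omega)]
    simp [Nat.mul_div_cancel_left, Nat.mul_mod_right]

lemma tm_two_mul_add_one (n : ℕ) : tm (2*n+1) = (tm n + 1) % 2 := by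
  unfold tm
  rw [Nat.digits_def' (by norm_num : 1 < 2) (by omega)]
  have h1 : (2*n+1) % 2 = 1 := by omega
  have h2 : (2*n+1) / 2 = n := by omega
  rw [h1, h2]
  simp [List.sum_cons]
  omega

lemma tm_odd_of_eq_succ (n : ℕ) (h : tm n = tm (n+1)) : n % 2 = 1 := by
  by_contra h'
  obtain ⟨m, rfl⟩ : ∃ m, n = 2*m := ⟨n/2, by omega⟩
  rw [tm_two_mul, tm_two_mul_add_one] at h
  have := tm_lt m
  omega

lemma tm_no_three (n : ℕ) (h1 : tm n = tm (n+1)) (h2 : tm (n+1) = tm (n+2)) : False := by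
  have a := tm_odd_of_eq_succ n h1
  have b := tm_odd_of_eq_succ (n+1) h2
  omega

lemma tm_factor_eq (i ℓ : ℕ) (hpal : (tmFactor i ℓ).Palindrome) (j : ℕ) (hj : j < ℓ) :
    tm (i + j) = tm (i + (ℓ - 1 - j)) := by
  have hrev := hpal.reverse_eq
  have hlen : (tmFactor i ℓ).length = ℓ := by simp [tmFactor]
  have h := congrArg (fun l => l[j]?) hrev
  simp only [List.getElem?_reverse (by omega : j < (tmFactor i ℓ).length), hlen] at h
  simp only [tmFactor, List.getElem?_map, List.getElem?_range] at h
  have hj2 : ℓ - 1 - j < ℓ := by omega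
  simp [hj, hj2] at h
  exact h.symm

/-- Every occurrence of a palindromic factor of the Thue–Morse word whose
length is not 1 or 3 is of type `(m, 4 − m)`: its starting and ending positions
have opposite residues modulo 4, i.e., `2i + ℓ ≡ 0 (mod 4)`. -/
theorem tm_palindromic_factor_type (i ℓ : ℕ) (hℓ : 1 ≤ ℓ) (h1 : ℓ ≠ 1)
    (h3 : ℓ ≠ 3) (hpal : (tmFactor i ℓ).Palindrome) :
    (2 * i + ℓ) % 4 = 0 := by
  rcases Nat.even_or_odd ℓ with ⟨m, hm⟩ | ⟨k, hk⟩
  · -- even length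
    have hm1 : 1 ≤ m := by omega
    have e := tm_factor_eq i ℓ hpal (m-1) (by omega)
    have he : i + (ℓ - 1 - (m-1)) = (i + (m-1)) + 1 := by omega
    rw [he] at e
    have := tm_odd_of_eq_succ _ e
    omega
  · -- odd length, so k ≥ 2; derive a contradiction
    exfalso
    have hk2 : 2 ≤ k := by omega
    have e1 := tm_factor_eq i ℓ hpal (k-1) (by omega)
    have e2 := tm_factor_eq i ℓ hpal (k-2) (by omega)
    obtain ⟨p, hp | hp⟩ : ∃ p, i + k = 2*p+2 ∨ i + k = 2*p+3 := ⟨(i+k-2)/2, by omega⟩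
    · -- center even
      have a1 : i + (k-1) = 2*p+1 := by omega
      have a2 : i + (ℓ - 1 - (k-1)) = 2*(p+1)+1 := by omega
      have a3 : i + (k-2) = 2*p := by omega
      have a4 : i + (ℓ - 1 - (k-2)) = 2*(p+2) := by omega
      rw [a1, a2, tm_two_mul_add_one, tm_two_mul_add_one] at e1
      rw [a3, a4, tm_two_mul, tm_two_mul] at e2
      have hp1 := tm_lt p; have hp2 := tm_lt (p+1)
      have e1' : tm p = tm (p+1) := by omega
      exact tm_no_three p e1' (by rw [← e1', e2])
    · -- center odd
      have a1 : i + (k-1) = 2*(p+1):= by omega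
      have a2 : i + (ℓ - 1 - (k-1)) = 2*(p+2) := by omega
      have a3 : i + (k-2) = 2*p+1 := by omega
      have a4 : i + (ℓ - 1 - (k-2)) = 2*(p+2)+1 := by omega
      rw [a1, a2, tm_two_mul, tm_two_mul] at e1
      rw [a3, a4, tm_two_mul_add_one, tm_two_mul_add_one] at e2
      have hp1 := tm_lt p; have hp2 := tm_lt (p+2)
      have e2' : tm p = tm (p+2) := by omega
      exact tm_no_three p (by rw [e2', e1]) e1
end

section
/- For every N ≥ 1, PPL_t(4N − 2) > PPL_t(4N). -/
/-! ### Basic facts about `tm` -/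

lemma tm_le (n : ℕ) : tm n ≤ 1 := Nat.lt_succ_iff.mp (Nat.mod_lt _ (by norm_num))

lemma tm2 (n : ℕ) : tm (2 * n) = tm n := by
  rcases Nat.eq_zero_or_pos n with rfl | hn
  · rfl
  · unfold tm
    rw [Nat.digits_def' (by norm_num : 1 < 2) (by omega : 0 < 2 * n)]
    simp [Nat.mul_div_cancel_left _ (by norm_num : 0 < 2), Nat.mul_mod_right]

lemma tm2' (n : ℕ) : tm (2 * n + 1) + tm n = 1 := by
  unfold tm
  rw [Nat.digits_def' (by norm_num : 1 < 2) (by omega : 0 < 2 * n + 1)]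
  have h1 : (2 * n + 1) % 2 = 1 := by omega
  have h2 : (2 * n + 1) / 2 = n := by omega
  rw [h1, h2]
  simp only [List.sum_cons]
  omega

lemma tm4_0 (n : ℕ) : tm (4 * n) = tm n := by
  have h : 4 * n = 2 * (2 * n) := by ring
  rw [h, tm2, tm2]

lemma tm4_1 (n : ℕ) : tm (4 * n + 1) + tm n = 1 := by
  have h : 4 * n + 1 = 2 * (2 * n) + 1 := by ring
  have := tm2' (2 * n)
  have := tm2 n
  rw [h]; omega

lemma tm4_2 (n : ℕ) : tm (4 * n + 2) + tm n = 1 := by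
  have h : 4 * n + 2 = 2 * (2 * n + 1) := by ring
  have := tm2' n
  rw [h, tm2]; omega

lemma tm4_3 (n : ℕ) : tm (4 * n + 3) = tm n := by
  have h : 4 * n + 3 = 2 * (2 * n + 1) + 1 := by ring
  have h1 := tm2' (2 * n + 1)
  have h2 := tm2' n
  rw [h]; omega

/-- No three consecutive equal letters in the Thue–Morse word. -/
lemma no3 (k : ℕ) (h1 : tm k = tm (k + 1)) (h2 : tm (k + 1) = tm (k + 2)) : False := by
  rcases Nat.even_or_odd k with ⟨z, hz⟩ | ⟨z, hz⟩
  · obtain rfl : k = 2 * z := by omega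
    have := tm2 z
    have := tm2' z
    omega
  · obtain rfl : k = 2 * z + 1 := by omega
    have e1 : 2 * z + 1 + 1 = 2 * (z + 1) := by ring
    have e2 : 2 * z + 1 + 2 = 2 * (z + 1) + 1 := by ring
    rw [e1, e2] at h2
    have := tm2 (z + 1)
    have := tm2' (z + 1)
    omega

lemma center_contra (y : ℕ) (h1 : tm (y + 1) = tm (y + 3)) (h2 : tm y = tm (y + 4)) :
    False := by
  rcases Nat.even_or_odd y with ⟨z, hz⟩ | ⟨z, hz⟩
  · obtain rfl : y = 2 * z := by omega
    have e1 : 2 * z + 3 = 2 * (z + 1) + 1 := by ring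
    have e2 : 2 * z + 4 = 2 * (z + 2) := by ring
    rw [e1] at h1
    rw [e2, tm2, tm2] at h2
    have a1 := tm2' z
    have a2 := tm2' (z + 1)
    -- tm z = tm (z+1), tm z = tm (z+2)
    exact no3 z (by omega) (by omega)
  · obtain rfl : y = 2 * z + 1 := by omega
    have e1 : 2 * z + 1 + 1 = 2 * (z + 1) := by ring
    have e2 : 2 * z + 1 + 3 = 2 * (z + 2) := by ring
    have e3 : 2 * z + 1 + 4 = 2 * (z + 2) + 1 := by ring
    rw [e1, e2, tm2, tm2] at h1
    rw [e3] at h2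
    have a1 := tm2' z
    have a2 := tm2' (z + 2)
    exact no3 z (by omega) (by omega)

/-! ### Palindrome and antipalindrome occurrences -/

/-- `Pal c m` : the factor `t[c..m)` of the Thue–Morse word is a palindrome. -/
def Pal (c m : ℕ) : Prop :=
  ∀ i j, c ≤ i → i ≤ j → j < m → i + j + 1 = c + m → tm i = tm j

/-- `APal c m` : the factor `t[c..m)` of the Thue–Morse word is an antipalindrome. -/
def APal (c m : ℕ) : Prop :=
  ∀ i j, c ≤ i → i ≤ j → j < m → i + j + 1 = c + m → tm i + tm j = 1

lemma pal_single (c : ℕ) : Pal c (c + 1) := by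
  intro i j h1 h2 h3 h4
  have hij : i = j := by omega
  exact congrArg tm hij

lemma pal_pair {c : ℕ} (h : tm c = tm (c + 1)) : Pal c (c + 2) := by
  intro i j h1 h2 h3 h4
  have hi : i = c := by omega
  have hj : j = c + 1 := by omega
  rw [hi, hj]; exact h

lemma pal_trim {c m : ℕ} (h : Pal c m) : Pal (c + 1) (m - 1) := by
  intro i j h1 h2 h3 h4
  exact h i j (by omega) h2 (by omega) (by omega)

lemma pal_extend {n k : ℕ} (h : Pal (n + 1) k) (hb : tm n = tm k) : Pal n (k + 1) := by
  intro i j h1 h2 h3 h4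
  rcases eq_or_lt_of_le h1 with rfl | hi
  · obtain rfl : j = k := by omega
    exact hb
  · exact h i j (by omega) h2 (by omega) (by omega)

lemma apal_odd_contra {e f : ℕ} (h : APal e f) (hef : e < f) (hpar : (e + f) % 2 = 1) :
    False := by
  obtain ⟨i, hi⟩ : ∃ i, e + f = 2 * i + 1 := ⟨(e + f - 1) / 2, by omega⟩
  have := h i i (by omega) le_rfl (by omega) (by omega)
  omega

lemma pal_apal_even {a b : ℕ} (h : Pal (2 * a) (2 * b)) : APal a b := by
  intro i j h1 h2 h3 h4
  have := h (2 * i) (2 * j + 1) (by omega) (by omega) (by omega) (by omega)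
  have := tm2 i
  have := tm2' j
  omega

lemma pal_apal_odd {a b : ℕ} (h : Pal (2 * a + 1) (2 * b + 1)) : APal (a + 1) b := by
  intro i j h1 h2 h3 h4
  have := h (2 * i) (2 * j + 1) (by omega) (by omega) (by omega) (by omega)
  have := tm2 i
  have := tm2' j
  omega

lemma apal_pal_even {a b : ℕ} (h : APal (2 * a) (2 * b)) : Pal a b := by
  intro i j h1 h2 h3 h4
  have := h (2 * i) (2 * j + 1) (by omega) (by omega) (by omega) (by omega)
  have := tm2 i
  have := tm2' j
  omega

lemma apal_pal_odd {a b : ℕ} (h : APal (2 * a + 1) (2 * b + 1)) : Pal (a + 1) b := by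
  intro i j h1 h2 h3 h4
  have := h (2 * i) (2 * j + 1) (by omega) (by omega) (by omega) (by omega)
  have := tm2 i
  have := tm2' j
  omega

/-- boundary condition of an odd-position antipalindrome. -/
lemma apal_boundary {n k : ℕ} (h : APal (2 * n + 1) (2 * k + 1)) (hnk : n < k) :
    tm n = tm k := by
  have := h (2 * n + 1) (2 * k) (by omega) (by omega) (by omega) (by omega)
  have := tm2' n
  have := tm2 k
  omega

lemma pal_up {a b : ℕ} (h : Pal a b) : APal (2 * a) (2 * b) := by
  intro i j h1 h2 h3 h4
  rcases Nat.even_or_odd i with ⟨u, hu⟩ | ⟨u, hu⟩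
  · obtain rfl : i = 2 * u := by omega
    obtain ⟨v, rfl⟩ : ∃ v, j = 2 * v + 1 := ⟨(j - 1) / 2, by omega⟩
    have := h u v (by omega) (by omega) (by omega) (by omega)
    have := tm2 u
    have := tm2' v
    omega
  · obtain rfl : i = 2 * u + 1 := by omega
    obtain ⟨v, rfl⟩ : ∃ v, j = 2 * v := ⟨j / 2, by omega⟩
    have := h u v (by omega) (by omega) (by omega) (by omega)
    have := tm2' u
    have := tm2 v
    omega

lemma apal_up {a b : ℕ} (h : APal a b) : Pal (2 * a) (2 * b) := by
  intro i j h1 h2 h3 h4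
  rcases Nat.even_or_odd i with ⟨u, hu⟩ | ⟨u, hu⟩
  · obtain rfl : i = 2 * u := by omega
    obtain ⟨v, rfl⟩ : ∃ v, j = 2 * v + 1 := ⟨(j - 1) / 2, by omega⟩
    have := h u v (by omega) (by omega) (by omega) (by omega)
    have := tm2 u
    have := tm2' v
    omega
  · obtain rfl : i = 2 * u + 1 := by omega
    obtain ⟨v, rfl⟩ : ∃ v, j = 2 * v := ⟨j / 2, by omega⟩
    have := h u v (by omega) (by omega) (by omega) (by omega)
    have := tm2' u
    have := tm2 v
    omega

lemma pal_up4 {a b : ℕ} (h : Pal a b) : Pal (4 * a) (4 * b) := by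
  have := apal_up (pal_up h)
  have e1 : 2 * (2 * a) = 4 * a := by ring
  have e2 : 2 * (2 * b) = 4 * b := by ring
  rwa [e1, e2] at this

/-! ### The function `F` -/

def F (n : ℕ) : ℕ :=
  if n = 0 then 0
  else if n % 4 = 0 then F (n / 4)
  else if n % 4 = 1 then F (n / 4) + 1
  else if n % 4 = 2 then min (F (n / 4)) (F (n / 4 + 1)) + 2
  else min (F (n / 4) + 2) (F (n / 4 + 1) + 1)
termination_by n
decreasing_by all_goals omega

lemma F_zero : F 0 = 0 := by rw [F]; simp

lemma F4_0 (n : ℕ) : F (4 * n) = F n := by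
  rcases Nat.eq_zero_or_pos n with rfl | hn
  · rfl
  · rw [F]
    have h1 : ¬ (4 * n = 0) := by omega
    have h2 : 4 * n % 4 = 0 := by omega
    have h3 : 4 * n / 4 = n := by omega
    simp [h1, h2, h3]

lemma F4_1 (n : ℕ) : F (4 * n + 1) = F n + 1 := by
  rw [F]
  have h2 : (4 * n + 1) % 4 = 1 := by omega
  have h3 : (4 * n + 1) / 4 = n := by omega
  simp [h2, h3]

lemma F4_2 (n : ℕ) : F (4 * n + 2) = min (F n) (F (n + 1)) + 2 := by
  rw [F]
  have h2 : (4 * n + 2) % 4 = 2 := by omega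
  have h3 : (4 * n + 2) / 4 = n := by omega
  simp [h2, h3]

lemma F4_3 (n : ℕ) : F (4 * n + 3) = min (F n + 2) (F (n + 1) + 1) := by
  rw [F]
  have h2 : (4 * n + 3) % 4 = 3 := by omega
  have h3 : (4 * n + 3) / 4 = n := by omega
  simp [h2, h3]

/-- `F` is 1-Lipschitz. -/
lemma F_lip : ∀ n : ℕ, F (n + 1) ≤ F n + 1 ∧ F n ≤ F (n + 1) + 1 := by
  intro n
  induction n using Nat.strong_induction_on with
  | _ n IH =>
    rcases Nat.eq_zero_or_pos n with rfl | hn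
    · have h1 : F 1 = 1 := by have := F4_1 0; simpa [F_zero] using this
      rw [F_zero, h1]; omega
    · have hr : n % 4 = 0 ∨ n % 4 = 1 ∨ n % 4 = 2 ∨ n % 4 = 3 := by omega
      rcases hr with h | h | h | h
      · obtain ⟨q, rfl⟩ : ∃ q, n = 4 * q := ⟨n / 4, by omega⟩
        rw [F4_0, F4_1]; omega
      · obtain ⟨q, rfl⟩ : ∃ q, n = 4 * q + 1 := ⟨n / 4, by omega⟩
        have e : 4 * q + 1 + 1 = 4 * q + 2 := by ring
        rw [e, F4_1, F4_2]
        have := IH q (by omega)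
        omega
      · obtain ⟨q, rfl⟩ : ∃ q, n = 4 * q + 2 := ⟨n / 4, by omega⟩
        have e : 4 * q + 2 + 1 = 4 * q + 3 := by ring
        rw [e, F4_2, F4_3]
        omega
      · obtain ⟨q, rfl⟩ : ∃ q, n = 4 * q + 3 := ⟨n / 4, by omega⟩
        have e : 4 * q + 3 + 1 = 4 * (q + 1) := by ring
        rw [e, F4_3, F4_0]
        have := IH q (by omega)
        omega

/-! ### The key lemma -/

theorem key : ∀ m c : ℕ, c < m → Pal c m → F m ≤ F c + 1 := by
  intro m
  induction m using Nat.strong_induction_on with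
  | _ m IH =>
    intro c hcm hp
    by_cases hpar : (m - c) % 2 = 1
    · -- odd length
      rcases (by omega : m = c + 1 ∨ m = c + 3 ∨ c + 5 ≤ m) with rfl | rfl | h5
      · -- length 1
        exact (F_lip c).1
      · -- length 3
        have hc2 : tm c = tm (c + 2) :=
          hp c (c + 2) le_rfl (by omega) (by omega) (by omega)
        have hr : c % 4 = 0 ∨ c % 4 = 1 ∨ c % 4 = 2 ∨ c % 4 = 3 := by omega
        rcases hr with h | h | h | h
        · obtain ⟨n, rfl⟩ : ∃ n, c = 4 * n := ⟨c / 4, by omega⟩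
          have := tm4_0 n
          have := tm4_2 n
          have := tm_le n
          omega
        · obtain ⟨n, rfl⟩ : ∃ n, c = 4 * n + 1 := ⟨c / 4, by omega⟩
          have := tm4_1 n
          have h3 : 4 * n + 1 + 2 = 4 * n + 3 := by ring
          rw [h3] at hc2
          have := tm4_3 n
          have := tm_le n
          omega
        · obtain ⟨n, rfl⟩ : ∃ n, c = 4 * n + 2 := ⟨c / 4, by omega⟩
          have e : 4 * n + 2 + 3 = 4 * (n + 1) + 1 := by ring
          rw [e, F4_1, F4_2]
          have := (F_lip n).1
          omega
        · obtain ⟨n, rfl⟩ : ∃ n, c = 4 * n + 3 := ⟨c / 4, by omega⟩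
          have e : 4 * n + 3 + 3 = 4 * (n + 1) + 2 := by ring
          rw [e, F4_2, F4_3]
          have := (F_lip n).1
          have := (F_lip (n + 1)).1
          omega
      · -- odd length ≥ 5 : impossible
        exfalso
        obtain ⟨y, hy⟩ : ∃ y, c + m = 2 * y + 5 := ⟨(c + m - 5) / 2, by omega⟩
        have h1 : tm (y + 1) = tm (y + 3) :=
          hp (y + 1) (y + 3) (by omega) (by omega) (by omega) (by omega)
        have h2 : tm y = tm (y + 4) :=
          hp y (y + 4) (by omega) (by omega) (by omega) (by omega)
        exact center_contra y h1 h2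
    · -- even length
      have hme : (c + m) % 2 = 0 := by omega
      rcases (by omega : c % 2 = 0 ∨ c % 2 = 1) with hce | hco
      · -- c even, m even
        obtain ⟨a, rfl⟩ : ∃ a, c = 2 * a := ⟨c / 2, by omega⟩
        obtain ⟨b, rfl⟩ : ∃ b, m = 2 * b := ⟨m / 2, by omega⟩
        have A : APal a b := pal_apal_even hp
        rcases (by omega : a % 2 = 0 ∨ a % 2 = 1) with hae | hao
        · -- c ≡ 0 mod 4
          obtain ⟨a', rfl⟩ : ∃ a', a = 2 * a' := ⟨a / 2, by omega⟩
          rcases (by omega : b % 2 = 1 ∨ b % 2 = 0) with hbo | hbe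
          · exact absurd (apal_odd_contra A (by omega) (by omega)) (by simp)
          · obtain ⟨b', rfl⟩ : ∃ b', b = 2 * b' := ⟨b / 2, by omega⟩
            have P : Pal a' b' := apal_pal_even A
            have hab : a' < b' := by omega
            have h1 : F b' ≤ F a' + 1 := IH b' (by omega) a' hab P
            have e1 : 2 * (2 * a') = 4 * a' := by ring
            have e2 : 2 * (2 * b') = 4 * b' := by ring
            rw [e1, e2, F4_0, F4_0]
            exact h1
        · -- c ≡ 2 mod 4
          obtain ⟨n, rfl⟩ : ∃ n, a = 2 * n + 1 := ⟨a / 2, by omega⟩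
          rcases (by omega : b % 2 = 0 ∨ b % 2 = 1) with hbe | hbo
          · exact absurd (apal_odd_contra A (by omega) (by omega)) (by simp)
          · obtain ⟨k, rfl⟩ : ∃ k, b = 2 * k + 1 := ⟨b / 2, by omega⟩
            have hnk : n < k := by omega
            have hb : tm n = tm k := apal_boundary A hnk
            have hint : Pal (n + 1) k := apal_pal_odd A
            have hext : Pal n (k + 1) := pal_extend hint hb
            have h1 : F (k + 1) ≤ F n + 1 := IH (k + 1) (by omega) n (by omega) hext
            have h2 : F k ≤ F (n + 1) + 1 := by
              rcases (by omega : n + 1 = k ∨ n + 1 < k) with rfl | hlt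
              · omega
              · exact IH k (by omega) (n + 1) hlt hint
            have e1 : 2 * (2 * n + 1) = 4 * n + 2 := by ring
            have e2 : 2 * (2 * k + 1) = 4 * k + 2 := by ring
            rw [e1, e2, F4_2, F4_2]
            omega
      · -- c odd, m odd
        rcases (by omega : c % 4 = 1 ∨ c % 4 = 3) with h1 | h3
        · obtain ⟨n, rfl⟩ : ∃ n, c = 4 * n + 1 := ⟨c / 4, by omega⟩
          have hp' : Pal (2 * (2 * n) + 1) (2 * ((m - 1) / 2) + 1) := by
            have e : 2 * ((m - 1) / 2) + 1 = m := by omega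
            rw [e]
            have e2 : 2 * (2 * n) + 1 = 4 * n + 1 := by ring
            rwa [e2]
          have A : APal (2 * n + 1) ((m - 1) / 2) := pal_apal_odd hp'
          rcases (by omega : m % 4 = 1 ∨ m % 4 = 3) with hm1 | hm3
          · exfalso
            obtain ⟨k, rfl⟩ : ∃ k, m = 4 * k + 1 := ⟨m / 4, by omega⟩
            have e : (4 * k + 1 - 1) / 2 = 2 * k := by omega
            rw [e] at A
            exact apal_odd_contra A (by omega) (by omega)
          · obtain ⟨k, rfl⟩ : ∃ k, m = 4 * k + 3 := ⟨m / 4, by omega⟩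
            have e : (4 * k + 3 - 1) / 2 = 2 * k + 1 := by omega
            rw [e] at A
            rw [F4_1, F4_3]
            rcases (by omega : k = n ∨ n < k) with rfl | hnk
            · omega
            · have hb : tm n = tm k := apal_boundary A hnk
              have hint : Pal (n + 1) k := apal_pal_odd A
              have hext : Pal n (k + 1) := pal_extend hint hb
              have h1 : F (k + 1) ≤ F n + 1 := IH (k + 1) (by omega) n (by omega) hext
              omega
        · obtain ⟨n, rfl⟩ : ∃ n, c = 4 * n + 3 := ⟨c / 4, by omega⟩
          have hp' : Pal (2 * (2 * n + 1) + 1) (2 * ((m - 1) / 2) + 1) := by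
            have e : 2 * ((m - 1) / 2) + 1 = m := by omega
            rw [e]
            have e2 : 2 * (2 * n + 1) + 1 = 4 * n + 3 := by ring
            rwa [e2]
          have A : APal (2 * n + 2) ((m - 1) / 2) := pal_apal_odd hp'
          rcases (by omega : m % 4 = 3 ∨ m % 4 = 1) with hm3 | hm1
          · exfalso
            obtain ⟨k, rfl⟩ : ∃ k, m = 4 * k + 3 := ⟨m / 4, by omega⟩
            have e : (4 * k + 3 - 1) / 2 = 2 * k + 1 := by omega
            rw [e] at A
            exact apal_odd_contra A (by omega) (by omega)
          · obtain ⟨k, rfl⟩ : ∃ k, m = 4 * k + 1 := ⟨m / 4, by omega⟩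
            have e : (4 * k + 1 - 1) / 2 = 2 * k := by omega
            rw [e] at A
            have hk : n + 1 ≤ k := by omega
            rw [F4_1, F4_3]
            have hlipn := (F_lip n).1
            rcases (by omega : k = n + 1 ∨ n + 1 < k) with rfl | hlt
            · omega
            · have A' : APal (2 * (n + 1)) (2 * k) := by
                have e2 : 2 * (n + 1) = 2 * n + 2 := by ring
                rwa [e2]
              have hint : Pal (n + 1) k := apal_pal_even A'
              have h2 : F k ≤ F (n + 1) + 1 := IH k (by omega) (n + 1) hlt hint
              omega

/-! ### Lists: prefixes and segments of the Thue–Morse word -/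

def pref (n : ℕ) : List ℕ := (List.range n).map tm

def seg (c m : ℕ) : List ℕ := (List.range (m - c)).map (fun i => tm (c + i))

lemma pplTM_eq (n : ℕ) : pplTM n = palLen (pref n) := rfl

@[simp] lemma seg_length (c m : ℕ) : (seg c m).length = m - c := by simp [seg]

lemma pref_add (c d : ℕ) : pref (c + d) = pref c ++ seg c (c + d) := by
  rw [pref, List.range_add, List.map_append]
  congr 1
  rw [seg]
  have e : c + d - c = d := by omega
  rw [e, List.map_map]
  rfl

lemma pref_append {c m : ℕ} (h : c ≤ m) : pref m = pref c ++ seg c m := by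
  have e : m = c + (m - c) := by omega
  calc pref m = pref (c + (m - c)) := by rw [← e]
    _ = pref c ++ seg c (c + (m - c)) := pref_add _ _
    _ = pref c ++ seg c m := by rw [← e]

lemma seg_getElem {c m i : ℕ} (h : i < m - c) : (seg c m)[i]'(by simpa using h) = tm (c + i) := by
  simp [seg]

/-- Bridge between `Pal` and `List.Palindrome` of the segment. -/
lemma pal_iff_seg {c m : ℕ} (hcm : c ≤ m) : Pal c m ↔ (seg c m).Palindrome := by
  constructor
  · intro h
    apply List.Palindrome.of_reverse_eq
    apply List.ext_getElem (by simp)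
    intro i h1 h2
    have hi : i < m - c := by simpa using h2
    rw [List.getElem_reverse]
    simp only [seg_length]
    rw [seg_getElem (by omega : m - c - 1 - i < m - c), seg_getElem hi]
    rcases (by omega : c + (m - c - 1 - i) ≤ c + i ∨ c + i ≤ c + (m - c - 1 - i)) with hle | hle
    · exact h _ _ (by omega) hle (by omega) (by omega)
    · exact (h _ _ (by omega) hle (by omega) (by omega)).symm
  · intro h i j h1 h2 h3 h4
    have hrev := h.reverse_eq
    obtain ⟨u, rfl⟩ : ∃ u, i = c + u := ⟨i - c, by omega⟩
    obtain ⟨v, rfl⟩ : ∃ v, j = c + v := ⟨j - c, by omega⟩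
    have hu : u < m - c := by omega
    have hkey : ∀ (k : ℕ), k < m - c → tm (c + k) = tm (c + (m - c - 1 - k)) := by
      intro k hk
      have h1' : k < (seg c m).reverse.length := by simpa using hk
      have hrv := List.getElem_reverse (l := seg c m) (i := k) h1'
      rw [List.getElem_of_eq hrev] at hrv
      simp only [seg_length] at hrv
      rw [seg_getElem hk, seg_getElem (by omega : m - c - 1 - k < m - c)] at hrv
      exact hrv
    have := hkey u hu
    rw [show m - c - 1 - u = v by omega] at this
    exact this

/-! ### palLen API -/

lemma palLen_le {w : List ℕ} {ps : List (List ℕ)} (h : IsPalDecomp w ps) :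
    palLen w ≤ ps.length :=
  Nat.sInf_le ⟨ps, rfl, h⟩

lemma singleton_decomp (w : List ℕ) : IsPalDecomp w (w.map fun a => [a]) := by
  constructor
  · induction w with
    | nil => rfl
    | cons a l ih => simp_all
  · intro p hp
    simp only [List.mem_map] at hp
    obtain ⟨a, -, rfl⟩ := hp
    exact ⟨by simp, List.Palindrome.singleton a⟩

lemma exists_min_decomp (w : List ℕ) :
    ∃ ps, IsPalDecomp w ps ∧ ps.length = palLen w := by
  have hne : {k | ∃ ps, ps.length = k ∧ IsPalDecomp w ps}.Nonempty :=
    ⟨(w.map fun a => [a]).length, w.map fun a => [a], rfl, singleton_decomp w⟩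
  obtain ⟨ps, hlen, hps⟩ := Nat.sInf_mem hne
  exact ⟨ps, hps, hlen⟩

lemma pplTM_zero : pplTM 0 = 0 := by
  have : IsPalDecomp (pref 0) [] := ⟨rfl, by simp⟩
  have := palLen_le this
  simpa [pplTM_eq] using this

/-- The step lemma: attaching one palindromic factor. -/
lemma pplTM_step {c m : ℕ} (hcm : c < m) (hpal : Pal c m) : pplTM m ≤ pplTM c + 1 := by
  obtain ⟨ps, hps, hlen⟩ := exists_min_decomp (pref c)
  have hdec : IsPalDecomp (pref m) (ps ++ [seg c m]) := by
    constructor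
    · rw [List.flatten_append, hps.1]
      simp [pref_append (le_of_lt hcm)]
    · intro p hp
      rcases List.mem_append.mp hp with h | h
      · exact hps.2 p h
      · simp only [List.mem_singleton] at h
        subst h
        refine ⟨?_, (pal_iff_seg (le_of_lt hcm)).mp hpal⟩
        have : (seg c m).length = m - c := seg_length c m
        intro hnil
        rw [hnil] at this
        simp at this
        omega
  have := palLen_le hdec
  rw [pplTM_eq, pplTM_eq, ← hlen]
  simpa using this

/-- Extracting the last palindrome from a decomposition of a prefix. -/
lemma last_piece {m : ℕ} (hm : 0 < m) {ps : List (List ℕ)}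
    (h : IsPalDecomp (pref m) ps) :
    ∃ c qs, c < m ∧ Pal c m ∧ IsPalDecomp (pref c) qs ∧ qs.length + 1 = ps.length := by
  have hne : ps ≠ [] := by
    intro hnil
    have := h.1
    rw [hnil] at this
    have := congrArg List.length this
    simp [pref] at this
    omega
  obtain ⟨qs, p, rfl⟩ : ∃ qs p, ps = qs ++ [p] := by
    rcases List.eq_nil_or_concat' ps with h' | ⟨qs, p, h'⟩
    · exact absurd h' hne
    · exact ⟨qs, p, h'⟩
  have hp := h.2 p (by simp)
  have hflat : qs.flatten ++ p = pref m := by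
    have := h.1
    rwa [List.flatten_append, List.flatten_cons, List.flatten_nil, List.append_nil] at this
  have hLm : (pref m).length = m := by simp [pref]
  have hlen0 : qs.flatten.length + p.length = m := by
    have := congrArg List.length hflat
    rwa [List.length_append, hLm] at this
  have hplen : p.length ≤ m := by omega
  set c := m - p.length with hc
  have hql : qs.flatten.length = c := by omega
  have hcm : c < m := by
    have : p.length ≠ 0 := by
      intro h0
      exact hp.1 (List.length_eq_zero_iff.mp h0)
    omega
  have hsplit : pref c ++ seg c m = pref m := (pref_append (by omega)).symm
  have heq : qs.flatten = pref c ∧ p = seg c m := by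
    have hlen2 : qs.flatten.length = (pref c).length := by
      simp [pref, hql]
    have := List.append_inj (hflat.trans hsplit.symm) (by simpa using hlen2)
    exact this
  refine ⟨c, qs, hcm, ?_, ⟨heq.1, fun q hq => h.2 q (List.mem_append.mpr (Or.inl hq))⟩, by simp⟩
  rw [pal_iff_seg (le_of_lt hcm)]
  rw [← heq.2]
  exact hp.2

lemma exists_last {m : ℕ} (hm : 0 < m) :
    ∃ c, c < m ∧ Pal c m ∧ pplTM m = pplTM c + 1 := by
  obtain ⟨ps, hps, hlen⟩ := exists_min_decomp (pref m)
  obtain ⟨c, qs, hcm, hpal, hqs, hq⟩ := last_piece hm hps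
  refine ⟨c, hcm, hpal, ?_⟩
  have h1 : pplTM c ≤ qs.length := palLen_le hqs
  have h2 : pplTM m ≤ pplTM c + 1 := pplTM_step hcm hpal
  have h3 : pplTM m = ps.length := by rw [pplTM_eq, ← hlen]
  omega

/-! ### Lower bound: `F ≤ pplTM` -/

lemma F_le_decomp : ∀ m : ℕ, ∀ ps : List (List ℕ), IsPalDecomp (pref m) ps →
    F m ≤ ps.length := by
  intro m
  induction m using Nat.strong_induction_on with
  | _ m IH =>
    intro ps hps
    rcases Nat.eq_zero_or_pos m with rfl | hm
    · rw [F_zero]; omega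
    · obtain ⟨c, qs, hcm, hpal, hqs, hq⟩ := last_piece hm hps
      have h1 : F m ≤ F c + 1 := key m c hcm hpal
      have h2 : F c ≤ qs.length := IH c hcm qs hqs
      omega

lemma F_le_pplTM (m : ℕ) : F m ≤ pplTM m := by
  obtain ⟨ps, hps, hlen⟩ := exists_min_decomp (pref m)
  have := F_le_decomp m ps hps
  rw [pplTM_eq, ← hlen]
  exact this

/-! ### Upper bound: `pplTM ≤ F` -/

lemma pplTM_four (n : ℕ) : pplTM (4 * n) ≤ pplTM n := by
  induction n using Nat.strong_induction_on with
  | _ n IH =>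
    rcases Nat.eq_zero_or_pos n with rfl | hn
    · simp
    · obtain ⟨c, hcn, hpal, heq⟩ := exists_last hn
      have h1 : pplTM (4 * n) ≤ pplTM (4 * c) + 1 :=
        pplTM_step (by omega) (pal_up4 hpal)
      have h2 : pplTM (4 * c) ≤ pplTM c := IH c hcn
      omega

lemma pplTM_succ (n : ℕ) : pplTM (n + 1) ≤ pplTM n + 1 :=
  pplTM_step (by omega) (pal_single n)

lemma pplTM_succ' (a b : ℕ) (h : b = a + 1) : pplTM b ≤ pplTM a + 1 := by
  subst h; exact pplTM_succ a

lemma pplTM_le_F : ∀ m : ℕ, pplTM m ≤ F m := by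
  intro m
  induction m using Nat.strong_induction_on with
  | _ m IH =>
    rcases Nat.eq_zero_or_pos m with rfl | hm
    · rw [F_zero, pplTM_zero]
    · have hr : m % 4 = 0 ∨ m % 4 = 1 ∨ m % 4 = 2 ∨ m % 4 = 3 := by omega
      rcases hr with h | h | h | h
      · obtain ⟨q, rfl⟩ : ∃ q, m = 4 * q := ⟨m / 4, by omega⟩
        have hq1 : 1 ≤ q := by omega
        calc pplTM (4 * q) ≤ pplTM q := pplTM_four q
          _ ≤ F q := IH q (by omega)
          _ = F (4 * q) := (F4_0 q).symm
      · obtain ⟨q, rfl⟩ : ∃ q, m = 4 * q + 1 := ⟨m / 4, by omega⟩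
        rw [F4_1]
        have h1 : pplTM (4 * q + 1) ≤ pplTM (4 * q) + 1 := pplTM_succ (4 * q)
        have h2 := pplTM_four q
        have h3 : pplTM q ≤ F q := IH q (by omega)
        omega
      · obtain ⟨q, rfl⟩ : ∃ q, m = 4 * q + 2 := ⟨m / 4, by omega⟩
        rw [F4_2]
        -- bound 1: via q
        have b1 : pplTM (4 * q + 2) ≤ pplTM q + 2 := by
          have h1 := pplTM_succ' (4 * q + 1) (4 * q + 2) (by ring)
          have h2 := pplTM_succ (4 * q)
          have h3 := pplTM_four q
          omega
        -- bound 2: via q + 1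
        have b2 : pplTM (4 * q + 2) ≤ pplTM (q + 1) + 2 := by
          obtain ⟨c, hcq, hpal, heq⟩ := exists_last (show 0 < q + 1 by omega)
          rcases (by omega : c = q ∨ c < q) with rfl | hlt
          · have s1 := pplTM_succ' (4 * c + 1) (4 * c + 2) (by ring)
            have s2 := pplTM_succ (4 * c)
            have s3 := pplTM_four c
            omega
          · have hpal2 : Pal (4 * c + 2) (4 * q + 2) := by
              have h0 := pal_up4 hpal
              have h1 := pal_trim h0
              have h2 := pal_trim h1
              have e1 : 4 * c + 1 + 1 = 4 * c + 2 := by ring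
              have e2 : 4 * (q + 1) - 1 - 1 = 4 * q + 2 := by omega
              rwa [e1, e2] at h2
            have s1 : pplTM (4 * q + 2) ≤ pplTM (4 * c + 2) + 1 :=
              pplTM_step (by omega) hpal2
            have s2 := pplTM_succ' (4 * c + 1) (4 * c + 2) (by ring)
            have s3 := pplTM_succ (4 * c)
            have s4 := pplTM_four c
            omega
        have h3 : pplTM q ≤ F q := IH q (by omega)
        have h4 : pplTM (q + 1) ≤ F (q + 1) := IH (q + 1) (by omega)
        omega
      · obtain ⟨q, rfl⟩ : ∃ q, m = 4 * q + 3 := ⟨m / 4, by omega⟩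
        rw [F4_3]
        -- bound 1: via q
        have b1 : pplTM (4 * q + 3) ≤ pplTM q + 2 := by
          have hmid : Pal (4 * q + 1) (4 * q + 3) := by
            have := pal_pair (c := 4 * q + 1) (by
              have h1 := tm4_1 q
              have h2 := tm4_2 q
              have e : 4 * q + 1 + 1 = 4 * q + 2 := by ring
              rw [e]; omega)
            have e : 4 * q + 1 + 2 = 4 * q + 3 := by ring
            rwa [e] at this
          have s1 : pplTM (4 * q + 3) ≤ pplTM (4 * q + 1) + 1 :=
            pplTM_step (by omega) hmid
          have s2 := pplTM_succ (4 * q)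
          have s3 := pplTM_four q
          omega
        -- bound 2: via q + 1
        have b2 : pplTM (4 * q + 3) ≤ pplTM (q + 1) + 1 := by
          obtain ⟨c, hcq, hpal, heq⟩ := exists_last (show 0 < q + 1 by omega)
          have hpal2 : Pal (4 * c + 1) (4 * q + 3) := by
            have h0 := pal_up4 hpal
            have h1 := pal_trim h0
            have e2 : 4 * (q + 1) - 1 = 4 * q + 3 := by omega
            rwa [e2] at h1
          have s1 : pplTM (4 * q + 3) ≤ pplTM (4 * c + 1) + 1 :=
            pplTM_step (by omega) hpal2
          have s2 := pplTM_succ (4 * c)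
          have s3 := pplTM_four c
          omega
        have h3 : pplTM q ≤ F q := IH q (by omega)
        have h4 : pplTM (q + 1) ≤ F (q + 1) := IH (q + 1) (by omega)
        omega

/-- For every `N ≥ 1`, `PPL_t(4N − 2) > PPL_t(4N)`. -/
theorem pplTM_4N_sub_two_gt (N : ℕ) (hN : 1 ≤ N) :
    pplTM (4 * N - 2) > pplTM (4 * N) := by
  have e1 : 4 * N - 2 = 4 * (N - 1) + 2 := by omega
  have e2 : N - 1 + 1 = N := by omega
  have hlow : F (4 * (N - 1) + 2) ≤ pplTM (4 * N - 2) := by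
    rw [e1]; exact F_le_pplTM _
  have hF2 : F (4 * (N - 1) + 2) = min (F (N - 1)) (F (N - 1 + 1)) + 2 := F4_2 (N - 1)
  have hlip : F (N - 1 + 1) ≤ F (N - 1) + 1 := (F_lip (N - 1)).1
  have hup : pplTM (4 * N) ≤ F N := by
    have := pplTM_le_F (4 * N)
    rwa [F4_0] at this
  rw [e2] at hF2 hlip
  omega
end
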